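/- The integral over x from 0 to ∞ of sin(4√(x(x+1)))/√(x+1) · e^{-3x} equals √π/(5e). -/

import Mathlib

open Real MeasureTheory Set


-- t * exp (-c*t) ≤ 1/c
lemma texp_le {c : ℝ} (hc : 0 < c) (t : ℝ) (ht : 0 ≤ t) : t * Real.exp (-(c*t)) ≤ 1/c := by
  have h := Real.add_one_le_exp (c*t)
  have h2 : c*t ≤ Real.exp (c*t) := by nlinarith [mul_nonneg hc.le ht]
  have hpos := Real.exp_pos (c*t)
  rw [Real.exp_neg]
  rw [div_eq_mul_inv, ← mul_le_mul_iff_of_pos_right hpos, one_mul]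
  calc t * (Real.exp (c*t))⁻¹ * Real.exp (c*t) = t := by field_simp
    _ ≤ c⁻¹ * Real.exp (c*t) := by
        rw [inv_mul_eq_div, le_div_iff₀ hc]; linarith [mul_comm t c]

lemma master_bound {c : ℝ} (hc : 0 < c) {a : ℝ} (ha : (0:ℝ) < a) :
    (1 + a^2 + (a⁻¹)^2) * Real.exp (-c * (a^2 + (a⁻¹)^2)) ≤
      (1 + 2/c) * Real.exp (-(c/2) * a^2) := by
  set s := a^2 + (a⁻¹)^2 with hs
  have hs0 : 0 ≤ s := by positivity
  have h1 : 1 + a^2 + (a⁻¹)^2 = 1 + s := by ring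
  have hsplit : Real.exp (-c * s) = Real.exp (-((c/2)*s)) * Real.exp (-((c/2)*s)) := by
    rw [← Real.exp_add]; ring_nf
  have hb1 : (1+s) * Real.exp (-((c/2)*s)) ≤ 1 + 2/c := by
    have := texp_le (by positivity : (0:ℝ) < c/2) s hs0
    have he : Real.exp (-((c/2)*s)) ≤ 1 := Real.exp_le_one_iff.2 (by nlinarith)
    have : s * Real.exp (-((c/2)*s)) ≤ 2/c := by
      calc s * Real.exp (-((c/2)*s)) ≤ 1/(c/2) := this
        _ = 2/c := by rw [one_div_div]
    nlinarith [Real.exp_pos (-((c/2)*s))]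
  have hb2 : Real.exp (-((c/2)*s)) ≤ Real.exp (-(c/2)*a^2) := by
    apply Real.exp_le_exp.2; nlinarith [sq_nonneg a⁻¹]
  calc (1 + a^2 + (a⁻¹)^2) * Real.exp (-c*s)
      = ((1+s) * Real.exp (-((c/2)*s))) * Real.exp (-((c/2)*s)) := by rw [h1, hsplit]; ring
    _ ≤ (1 + 2/c) * Real.exp (-((c/2)*s)) := by
        apply mul_le_mul_of_nonneg_right hb1 (Real.exp_pos _).le
    _ ≤ (1 + 2/c) * Real.exp (-(c/2)*a^2) := by
        apply mul_le_mul_of_nonneg_left hb2; positivity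

lemma integrableOn_master {c : ℝ} (hc : 0 < c) :
    IntegrableOn (fun a : ℝ => (1 + a^2 + (a⁻¹)^2) * Real.exp (-c * (a^2 + (a⁻¹)^2)))
      (Ioi (0:ℝ)) := by
  have hint : IntegrableOn (fun a : ℝ => (1 + 2/c) * Real.exp (-(c/2) * a^2)) (Ioi 0) :=
    ((integrable_exp_neg_mul_sq (by positivity : (0:ℝ) < c/2)).const_mul _).integrableOn
  apply Integrable.mono hint
  · apply Measurable.aestronglyMeasurable; fun_prop
  · rw [ae_restrict_iff' measurableSet_Ioi]
    filter_upwards with a ha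
    have h1 : (0:ℝ) < a := ha
    rw [Real.norm_eq_abs, Real.norm_eq_abs, abs_of_nonneg (by positivity),
      abs_of_nonneg (by positivity)]
    exact master_bound hc h1


-- inversion substitution, generic target into a normed space
lemma integral_inv_scale {E : Type*} [NormedAddCommGroup E] [NormedSpace ℝ E]
    {γ : ℝ} (hγ : 0 < γ) (g : ℝ → E) :
    ∫ x in Ioi (0:ℝ), g x = ∫ a in Ioi (0:ℝ), (γ / a^2) • g (γ / a) := by
  have himg : (fun a : ℝ => γ / a) '' Ioi 0 = Ioi 0 := by
    ext y; constructor
    · rintro ⟨a, ha, rfl⟩; exact div_pos hγ ha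
    · intro hy; exact ⟨γ / y, div_pos hγ hy, by field_simp⟩
  have hder : ∀ x ∈ Ioi (0:ℝ), HasDerivWithinAt (fun a : ℝ => γ / a) (-(γ / x^2)) (Ioi 0) x := by
    intro x hx
    have hx0 : x ≠ 0 := ne_of_gt hx
    have : HasDerivAt (fun a : ℝ => γ / a) (-(γ / x^2)) x := by
      simpa [div_eq_mul_inv, mul_comm, neg_div] using (hasDerivAt_inv hx0).const_mul γ
    exact this.hasDerivWithinAt
  have hinj : InjOn (fun a : ℝ => γ / a) (Ioi 0) := by
    intro a ha b hb h
    have ha0 : a ≠ 0 := ne_of_gt ha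
    have hb0 : b ≠ 0 := ne_of_gt hb
    field_simp at h
    exact h.symm
  have := integral_image_eq_integral_abs_deriv_smul measurableSet_Ioi hder hinj g
  rw [himg] at this
  rw [this]
  apply setIntegral_congr_fun measurableSet_Ioi
  intro x hx
  have : (0:ℝ) < x := hx
  simp only [abs_neg]
  rw [abs_of_pos (by positivity)]

-- the t = a - γ/a substitution
lemma integral_sub_inv {E : Type*} [NormedAddCommGroup E] [NormedSpace ℝ E]
    {γ : ℝ} (hγ : 0 < γ) (g : ℝ → E) :
    ∫ x : ℝ, g x = ∫ a in Ioi (0:ℝ), (1 + γ / a^2) • g (a - γ / a) := by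
  set f : ℝ → ℝ := fun a => a - γ / a with hf
  have himg : f '' Ioi 0 = univ := by
    apply eq_univ_of_forall
    intro t
    set s := Real.sqrt (t^2 + 4*γ) with hsdef
    have hs2 : s^2 = t^2 + 4*γ := Real.sq_sqrt (by positivity)
    have hst : |t| < s := by
      rw [← Real.sqrt_sq_eq_abs]
      exact Real.sqrt_lt_sqrt (sq_nonneg t) (by linarith)
    have hA : 0 < (t + s)/2 := by
      have := neg_abs_le t; linarith [hst]
    refine ⟨(t+s)/2, hA, ?_⟩
    have h0 : (t+s)/2 ≠ 0 := ne_of_gt hA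
    have hts : t + s ≠ 0 := by
      have := neg_abs_le t; intro h; rw [hsdef] at h; nlinarith [hst]
    show (t+s)/2 - γ/((t+s)/2) = t
    field_simp
    nlinarith [hs2]
  have hder : ∀ x ∈ Ioi (0:ℝ), HasDerivWithinAt f (1 + γ / x^2) (Ioi 0) x := by
    intro x hx
    have hx0 : x ≠ 0 := ne_of_gt hx
    have h1 : HasDerivAt (fun a : ℝ => γ / a) (-(γ / x^2)) x := by
      simpa [div_eq_mul_inv, mul_comm, neg_div] using (hasDerivAt_inv hx0).const_mul γ
    have h2 := (hasDerivAt_id x).sub h1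
    have h3 : HasDerivAt f (1 + γ / x^2) x := by
      exact h2.congr_deriv (by ring)
    exact h3.hasDerivWithinAt
  have hinj : InjOn f (Ioi 0) := by
    intro a ha b hb h
    have ha0 : a ≠ 0 := ne_of_gt (show (0:ℝ) < a from ha)
    have hb0 : b ≠ 0 := ne_of_gt (show (0:ℝ) < b from hb)
    simp only [hf] at h
    have h2 : (a - b) * (a*b + γ) = 0 := by
      field_simp at h; nlinarith [h]
    have h3 : a*b + γ > 0 := by
      have : (0:ℝ) < a := ha; have : (0:ℝ) < b := hb
      positivity
    have := mul_eq_zero.1 h2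
    rcases this with h4 | h4
    · linarith
    · linarith
  have := integral_image_eq_integral_abs_deriv_smul measurableSet_Ioi hder hinj g
  rw [himg, setIntegral_univ] at this
  rw [this]
  apply setIntegral_congr_fun measurableSet_Ioi
  intro x hx
  have hx' : (0:ℝ) < x := hx
  simp only [hf]
  rw [abs_of_pos (by positivity)]


lemma integrableOn_exp_glasser {p q : ℝ} (hp : 0 < p) (hq : 0 < q) (w : ℝ → ℝ) {C : ℝ}
    (hC : 0 ≤ C) (hw : ∀ a ∈ Ioi (0:ℝ), |w a| ≤ C * (1 + a^2 + (a⁻¹)^2)) (hm : Measurable w) :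
    IntegrableOn (fun a : ℝ => w a * Real.exp (-(p * a^2 + q * (a⁻¹)^2))) (Ioi 0) := by
  set c := min p q with hc
  have hc0 : 0 < c := lt_min hp hq
  apply Integrable.mono ((integrableOn_master hc0).const_mul C)
  · apply Measurable.aestronglyMeasurable; fun_prop
  · rw [ae_restrict_iff' measurableSet_Ioi]
    filter_upwards with a ha
    have h1 : (0:ℝ) < a := ha
    rw [Real.norm_eq_abs, Real.norm_eq_abs, abs_mul, Real.abs_exp,
      abs_of_nonneg (by positivity : (0:ℝ) ≤ C * ((1 + a^2 + (a⁻¹)^2) * Real.exp (-c * (a^2 + (a⁻¹)^2))))]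
    have hb : Real.exp (-(p * a^2 + q * (a⁻¹)^2)) ≤ Real.exp (-c * (a^2 + (a⁻¹)^2)) := by
      apply Real.exp_le_exp.2
      have h2 : c ≤ p := min_le_left _ _
      have h3 : c ≤ q := min_le_right _ _
      nlinarith [sq_nonneg a, sq_nonneg a⁻¹]
    calc |w a| * Real.exp (-(p * a^2 + q * (a⁻¹)^2))
        ≤ (C * (1 + a^2 + (a⁻¹)^2)) * Real.exp (-c * (a^2 + (a⁻¹)^2)) :=
          mul_le_mul (hw a ha) hb (Real.exp_pos _).le (by positivity)
      _ = C * ((1 + a^2 + (a⁻¹)^2) * Real.exp (-c * (a^2 + (a⁻¹)^2))) := by ring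

theorem glasser_real {p q : ℝ} (hp : 0 < p) (hq : 0 < q) :
    ∫ a in Ioi (0:ℝ), Real.exp (-(p * a^2 + q * (a⁻¹)^2))
      = Real.sqrt (π/p) / 2 * Real.exp (-(2 * Real.sqrt (p*q))) := by
  set γ := Real.sqrt (q/p) with hγdef
  have hγ : 0 < γ := Real.sqrt_pos.2 (by positivity)
  have hγ2 : γ^2 = q/p := Real.sq_sqrt (by positivity)
  have hpγ2 : p * γ^2 = q := by rw [hγ2]; field_simp
  have hpγ : p * γ = Real.sqrt (p*q) := by
    rw [hγdef, ← Real.sqrt_sq hp.le, ← Real.sqrt_mul (by positivity)]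
    congr 1; field_simp; rw [Real.sq_sqrt (by positivity)]
  set g : ℝ → ℝ := fun a => Real.exp (-(p * a^2 + q * (a⁻¹)^2)) with hg
  set K := (∫ a in Ioi (0:ℝ), g a) with hK
  have stepa : K = ∫ a in Ioi (0:ℝ), (γ / a^2) * g a := by
    rw [hK, integral_inv_scale hγ g]
    apply setIntegral_congr_fun measurableSet_Ioi
    intro a ha
    have ha0 : (0:ℝ) < a := ha
    have hgg : g (γ / a) = g a := by
      simp only [hg]
      congr 1
      have e1 : p*(γ/a)^2 = q*(a⁻¹)^2 := by rw [div_pow, inv_pow, ← hpγ2]; ring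
      have e2 : q*((γ/a)⁻¹)^2 = p*a^2 := by
        rw [inv_div, div_pow, ← hpγ2]
        field_simp
      rw [e1, e2]
      ring
    show (γ / a^2) • g (γ/a) = γ/a^2 * g a
    rw [hgg, smul_eq_mul]
  have hint1 : IntegrableOn g (Ioi 0) := by
    have := integrableOn_exp_glasser hp hq (fun _ => 1) zero_le_one
      (fun a ha => by
        have : (0:ℝ) < a := ha
        rw [abs_one]; nlinarith [sq_nonneg a, sq_nonneg a⁻¹]) measurable_const
    simpa [hg] using this
  have hint2 : IntegrableOn (fun a => (γ / a^2) * g a) (Ioi 0) := by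
    have := integrableOn_exp_glasser hp hq (fun a => γ / a^2) hγ.le
      (fun a ha => by
        have ha0 : (0:ℝ) < a := ha
        rw [abs_of_nonneg (by positivity)]
        show γ / a^2 ≤ γ * (1 + a^2 + (a⁻¹)^2)
        have h6 : γ / a^2 = γ * (a⁻¹)^2 := by field_simp
        rw [h6]
        nlinarith [mul_nonneg hγ.le (sq_nonneg a), hγ.le]) (by fun_prop)
    simpa [hg] using this
  have stepb : Real.sqrt (π/p) = Real.exp (2 * Real.sqrt (p*q)) * (2*K) := by
    have hgauss : (∫ t : ℝ, Real.exp (-p * t^2)) = Real.sqrt (π/p) := integral_gaussian p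
    rw [← hgauss, integral_sub_inv hγ (fun t => Real.exp (-p * t^2))]
    have key : ∀ a ∈ Ioi (0:ℝ), (1 + γ/a^2) • Real.exp (-p * (a - γ/a)^2)
        = Real.exp (2 * Real.sqrt (p*q)) * (g a + (γ/a^2) * g a) := by
      intro a ha
      have ha0 : (0:ℝ) < a := ha
      have ha0' : a ≠ 0 := ne_of_gt ha0
      have e1 : -p * (a - γ/a)^2 = 2*(p*γ) + -(p * a^2 + q * (a⁻¹)^2) := by
        field_simp
        nlinarith [hpγ2]
      rw [smul_eq_mul, e1, hpγ, Real.exp_add, hg]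
      ring
    rw [setIntegral_congr_fun measurableSet_Ioi key, integral_const_mul,
      integral_add hint1 hint2, ← stepa]
    ring
  rw [Real.exp_neg, stepb]
  have hE := Real.exp_pos (2 * Real.sqrt (p*q))
  field_simp


open Complex
noncomputable def expo (τ : ℂ) (a : ℝ) : ℂ :=
  -(((3/4:ℝ):ℂ) - τ*Complex.I) * ((a^2 : ℝ):ℂ) - (((3/4:ℝ):ℂ) + τ*Complex.I) * (((a⁻¹)^2 : ℝ):ℂ)

lemma expo_re (τ : ℂ) (a : ℝ) :
    (expo τ a).re = -((3/4 + τ.im) * a^2 + (3/4 - τ.im) * (a⁻¹)^2) := by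
  simp only [expo, Complex.sub_re, Complex.neg_re, Complex.mul_re, Complex.ofReal_re,
    Complex.ofReal_im, Complex.sub_im, Complex.neg_im, Complex.add_re, Complex.add_im,
    Complex.mul_im, Complex.I_re, Complex.I_im]
  ring

lemma deriv_aux (c A B : ℂ) (τ : ℂ) :
    HasDerivAt (fun τ : ℂ => Complex.exp (-(c - τ*Complex.I)*A - (c + τ*Complex.I)*B))
      ((Complex.I*A - Complex.I*B) * Complex.exp (-(c - τ*Complex.I)*A - (c + τ*Complex.I)*B))
      τ := by
  have h1 : HasDerivAt (fun τ : ℂ => c - τ*Complex.I) (-Complex.I) τ := by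
    simpa using ((hasDerivAt_id τ).mul_const Complex.I).const_sub c
  have h2 : HasDerivAt (fun τ : ℂ => c + τ*Complex.I) Complex.I τ := by
    simpa using ((hasDerivAt_id τ).mul_const Complex.I).const_add c
  have h3 : HasDerivAt (fun τ : ℂ => -(c - τ*Complex.I)*A - (c + τ*Complex.I)*B)
      (Complex.I*A - Complex.I*B) τ := by
    have := (h1.neg.mul_const A).sub (h2.mul_const B)
    exact this.congr_deriv (by ring)
  simpa [mul_comm] using h3.cexp

lemma expo_deriv (a : ℝ) (τ : ℂ) :
    HasDerivAt (fun τ => Complex.exp (expo τ a))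
      ((Complex.I * ((a^2:ℝ):ℂ) - Complex.I * (((a⁻¹)^2:ℝ):ℂ)) * Complex.exp (expo τ a)) τ :=
  deriv_aux ((3/4:ℝ):ℂ) _ _ τ






-- norm bound
lemma expo_norm_le {τ : ℂ} {m : ℝ} (hτ : |τ.im| ≤ m) (hm : m < 3/4) {a : ℝ} (ha : (0:ℝ) < a) :
    ‖Complex.exp (expo τ a)‖ ≤ Real.exp (-(3/4 - m) * (a^2 + (a⁻¹)^2)) := by
  rw [Complex.norm_exp, expo_re]
  apply Real.exp_le_exp.2
  have h1 := abs_le.1 hτ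
  nlinarith [sq_nonneg a, sq_nonneg a⁻¹]

lemma expo_meas (τ : ℂ) : Measurable (fun a : ℝ => Complex.exp (expo τ a)) := by
  unfold expo; fun_prop

lemma integrableOn_cexpo {τ : ℂ} (hτ : |τ.im| < 3/4) (w : ℝ → ℝ) {C : ℝ}
    (hC : 0 ≤ C) (hw : ∀ a ∈ Ioi (0:ℝ), |w a| ≤ C * (1 + a^2 + (a⁻¹)^2)) (hm : Measurable w) :
    IntegrableOn (fun a : ℝ => (w a : ℂ) * Complex.exp (expo τ a)) (Ioi 0) := by
  set c : ℝ := 3/4 - |τ.im| with hc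
  have hc0 : 0 < c := by simp only [hc]; linarith
  apply Integrable.mono ((integrableOn_master hc0).const_mul C)
  · apply Measurable.aestronglyMeasurable
    apply Measurable.mul _ (expo_meas τ)
    fun_prop
  · rw [ae_restrict_iff' measurableSet_Ioi]
    filter_upwards with a ha
    have h1 : (0:ℝ) < a := ha
    rw [norm_mul, Complex.norm_real, Real.norm_eq_abs, Real.norm_eq_abs,
      _root_.abs_of_nonneg (by positivity : (0:ℝ) ≤ C * ((1 + a^2 + (a⁻¹)^2) * Real.exp (-c * (a^2 + (a⁻¹)^2))))]
    have hb := expo_norm_le (le_of_eq rfl : |τ.im| ≤ |τ.im|) (by linarith [abs_nonneg τ.im] : |τ.im| < 3/4) h1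
    have hb2 : ‖Complex.exp (expo τ a)‖ ≤ Real.exp (-c * (a^2 + (a⁻¹)^2)) := by
      simpa [hc] using expo_norm_le (le_refl |τ.im|) hτ h1
    calc |w a| * ‖Complex.exp (expo τ a)‖
        ≤ (C * (1 + a^2 + (a⁻¹)^2)) * Real.exp (-c * (a^2 + (a⁻¹)^2)) :=
          mul_le_mul (hw a ha) hb2 (norm_nonneg _) (by positivity)
      _ = C * ((1 + a^2 + (a⁻¹)^2) * Real.exp (-c * (a^2 + (a⁻¹)^2))) := by ring

noncomputable def Jc (τ : ℂ) : ℂ := ∫ a in Ioi (0:ℝ), Complex.exp (expo τ a)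

lemma Jc_differentiableAt {τ₀ : ℂ} (hτ : |τ₀.im| < 3/4) : DifferentiableAt ℂ Jc τ₀ := by
  set m : ℝ := (3/4 + |τ₀.im|)/2 with hm
  have hm1 : |τ₀.im| < m := by simp only [hm]; linarith
  have hm2 : m < 3/4 := by simp only [hm]; linarith
  set ε : ℝ := m - |τ₀.im| with hε
  have hε0 : 0 < ε := by simp only [hε]; linarith
  set c : ℝ := 3/4 - m with hc
  have hc0 : 0 < c := by simp only [hc]; linarith
  have key := hasDerivAt_integral_of_dominated_loc_of_deriv_le (μ := volume.restrict (Ioi 0))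
    (F := fun τ (a : ℝ) => Complex.exp (expo τ a))
    (F' := fun τ (a : ℝ) => (Complex.I * ((a^2:ℝ):ℂ) - Complex.I * (((a⁻¹)^2:ℝ):ℂ))
      * Complex.exp (expo τ a))
    (bound := fun a => (1 + a^2 + (a⁻¹)^2) * Real.exp (-c * (a^2 + (a⁻¹)^2))) (x₀ := τ₀)
    (Metric.ball_mem_nhds τ₀ hε0) ?_ ?_ ?_ ?_ ?_ ?_
  · exact ⟨_, key.2⟩
  · filter_upwards with τ using (expo_meas τ).aestronglyMeasurable
  · apply IntegrableOn.integrable; simpa using integrableOn_cexpo hτ (fun _ => 1) zero_le_one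
      (fun a ha => by
        have : (0:ℝ) < a := ha
        rw [abs_one]; nlinarith [sq_nonneg a, sq_nonneg a⁻¹]) measurable_const
  · apply Measurable.aestronglyMeasurable
    apply Measurable.mul _ (expo_meas τ₀)
    fun_prop
  · rw [ae_restrict_iff' measurableSet_Ioi]
    filter_upwards with a ha
    intro τ hτball
    have ha0 : (0:ℝ) < a := ha
    have htm : |τ.im| ≤ m := by
      have h5 : |(τ - τ₀).im| ≤ ‖τ - τ₀‖ := Complex.abs_im_le_norm _
      have h6 : ‖τ - τ₀‖ < ε := by
        rw [← dist_eq_norm]; exact Metric.mem_ball.1 hτball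
      have h7 : |τ.im| ≤ |τ₀.im| + |(τ - τ₀).im| := by
        have : τ.im = τ₀.im + (τ - τ₀).im := by simp
        rw [this]; exact abs_add_le _ _
      simp only [hε] at h6
      linarith
    rw [norm_mul]
    have hn1 : ‖Complex.I * ((a^2:ℝ):ℂ) - Complex.I * (((a⁻¹)^2:ℝ):ℂ)‖ ≤ a^2 + (a⁻¹)^2 := by
      rw [← mul_sub, norm_mul, Complex.norm_I, one_mul, ← Complex.ofReal_sub,
        Complex.norm_real, Real.norm_eq_abs]
      calc |a^2 - (a⁻¹)^2| ≤ |a^2| + |(a⁻¹)^2| := abs_sub _ _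
        _ = a^2 + (a⁻¹)^2 := by
            rw [_root_.abs_of_nonneg (sq_nonneg a), _root_.abs_of_nonneg (sq_nonneg _)]
    calc ‖Complex.I * ((a^2:ℝ):ℂ) - Complex.I * (((a⁻¹)^2:ℝ):ℂ)‖ * ‖Complex.exp (expo τ a)‖
        ≤ (a^2 + (a⁻¹)^2) * Real.exp (-c * (a^2 + (a⁻¹)^2)) := by
          apply mul_le_mul hn1 _ (norm_nonneg _) (by positivity)
          simpa [hc] using expo_norm_le htm hm2 ha0
      _ ≤ (1 + a^2 + (a⁻¹)^2) * Real.exp (-c * (a^2 + (a⁻¹)^2)) := by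
          apply mul_le_mul_of_nonneg_right _ (Real.exp_pos _).le
          nlinarith [sq_nonneg a, sq_nonneg a⁻¹]
  · exact integrableOn_master hc0
  · rw [ae_restrict_iff' measurableSet_Ioi]
    filter_upwards with a ha
    intro τ hτball
    exact expo_deriv a τ



noncomputable def Gc (τ : ℂ) : ℂ :=
  ((Real.sqrt π : ℝ):ℂ)/2 * ((((3/4:ℝ):ℂ) - τ*Complex.I)^(-(1/2:ℂ)))
    * Complex.exp (-(2 * ((((9/16:ℝ):ℂ) + τ^2)^((1/2:ℂ)))))

def Strip : Set ℂ := {τ : ℂ | |τ.im| < 3/4}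

lemma isOpen_strip : IsOpen Strip := by
  have : Strip = Complex.im ⁻¹' (Ioo (-(3/4)) (3/4)) := by
    ext z; simp [Strip, abs_lt, mem_Ioo, and_comm]
  rw [this]
  exact isOpen_Ioo.preimage Complex.continuous_im

lemma preconnected_strip : IsPreconnected Strip := by
  have : Convex ℝ Strip := by
    have : Strip = {z : ℂ | -(3/4) < z.im} ∩ {z : ℂ | z.im < 3/4} := by
      ext z; simp [Strip, abs_lt]
    rw [this]
    exact (convex_halfSpace_im_gt _).inter (convex_halfSpace_im_lt _)
  exact this.isPreconnected

lemma base1_mem {τ : ℂ} (hτ : τ ∈ Strip) : (((3/4:ℝ):ℂ) - τ*Complex.I) ∈ Complex.slitPlane := by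
  rw [Complex.mem_slitPlane_iff]
  left
  have h := abs_lt.1 (show |τ.im| < 3/4 from hτ)
  simp only [Complex.sub_re, Complex.ofReal_re, Complex.mul_re, Complex.I_re, Complex.I_im]
  simp only [mul_zero, mul_one, zero_sub, sub_neg_eq_add]
  linarith [h.2]

lemma base2_mem {τ : ℂ} (hτ : τ ∈ Strip) : ((((9/16:ℝ):ℂ)) + τ^2) ∈ Complex.slitPlane := by
  rw [Complex.mem_slitPlane_iff]
  have h := abs_lt.1 (show |τ.im| < 3/4 from hτ)
  have hre : ((((9/16:ℝ):ℂ)) + τ^2).re = 9/16 + τ.re^2 - τ.im^2 := by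
    simp [Complex.add_re, Complex.sq_norm, pow_two, Complex.mul_re]
    ring
  have him : ((((9/16:ℝ):ℂ)) + τ^2).im = 2*τ.re*τ.im := by
    simp [Complex.add_im, pow_two, Complex.mul_im]
    ring
  by_cases hc : τ.re = 0 ∨ τ.im = 0
  · left
    rw [hre]
    rcases hc with h0 | h0 <;> rw [h0] <;> nlinarith [sq_nonneg τ.re, sq_nonneg τ.im, h.1, h.2]
  · right
    push_neg at hc
    rw [him]
    simp [hc.1, hc.2]

lemma Gc_differentiableAt {τ : ℂ} (hτ : τ ∈ Strip) : DifferentiableAt ℂ Gc τ := by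
  have hb1 : DifferentiableAt ℂ (fun τ : ℂ => ((3/4:ℝ):ℂ) - τ*Complex.I) τ :=
    (differentiableAt_const _).sub (differentiableAt_id.mul_const _)
  have hb2 : DifferentiableAt ℂ (fun τ : ℂ => (((9/16:ℝ):ℂ)) + τ^2) τ :=
    (differentiableAt_const _).add (differentiableAt_pow 2)
  have h1 : DifferentiableAt ℂ (fun τ : ℂ => (((3/4:ℝ):ℂ) - τ*Complex.I)^(-(1/2:ℂ))) τ :=
    hb1.cpow (differentiableAt_const _) (base1_mem hτ)
  have h2 : DifferentiableAt ℂ (fun τ : ℂ => Complex.exp (-(2 * ((((9/16:ℝ):ℂ) + τ^2)^((1/2:ℂ)))))) τ := by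
    apply DifferentiableAt.cexp
    apply DifferentiableAt.neg
    exact (hb2.cpow (differentiableAt_const _) (base2_mem hτ)).const_mul 2
  exact (((differentiableAt_const _).mul h1).mul h2)

lemma Jc_eval {s : ℝ} (hs : |s| < 3/4) : Jc (Complex.I*s) = Gc (Complex.I*s) := by
  have h := abs_lt.1 hs
  have hp : 0 < 3/4 + s := by linarith
  have hq : 0 < 3/4 - s := by linarith
  have hpq : (3/4 + s) * (3/4 - s) = 9/16 - s^2 := by ring
  have hexpo : ∀ a : ℝ, expo (Complex.I*s) a
      = ((-( (3/4+s) * a^2 + (3/4-s) * (a⁻¹)^2) : ℝ) : ℂ) := by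
    intro a
    simp only [expo]
    push_cast
    ring_nf
    rw [Complex.I_sq]
    ring
  have hJ : Jc (Complex.I*s) = ((∫ a in Ioi (0:ℝ),
      Real.exp (-((3/4+s) * a^2 + (3/4-s) * (a⁻¹)^2)) : ℝ) : ℂ) := by
    rw [Jc]
    calc (∫ a in Ioi (0:ℝ), Complex.exp (expo (Complex.I*s) a))
        = ∫ a in Ioi (0:ℝ), ((Real.exp (-((3/4+s) * a^2 + (3/4-s) * (a⁻¹)^2)) : ℝ) : ℂ) := by
          apply setIntegral_congr_fun measurableSet_Ioi
          intro a _
          show Complex.exp (expo (Complex.I*s) a) = _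
          simp only [hexpo a, ← Complex.ofReal_exp]
      _ = _ := integral_ofReal
  rw [hJ, glasser_real hp hq]
  -- now compute Gc
  have e2 : ((Complex.I*s)^2 : ℂ) = ((-(s^2) : ℝ) : ℂ) := by
    push_cast
    rw [mul_pow, Complex.I_sq]
    ring
  have e3 : (((9/16:ℝ):ℂ) + (Complex.I*s)^2) = (((9/16 - s^2 : ℝ)):ℂ) := by
    rw [e2]; push_cast; ring
  have e4 : (((3/4:ℝ):ℂ) - (Complex.I*s)*Complex.I) = (((3/4 + s : ℝ)):ℂ) := by
    have : (Complex.I*s)*Complex.I = Complex.I^2 * s := by ring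
    rw [this, Complex.I_sq]; push_cast; ring
  have h916 : (0:ℝ) ≤ 9/16 - s^2 := by nlinarith
  have ecpow1 : ((((9/16:ℝ):ℂ)) + (Complex.I*s)^2)^((1/2:ℂ))
      = ((Real.sqrt (9/16 - s^2) : ℝ) : ℂ) := by
    rw [e3, Real.sqrt_eq_rpow, Complex.ofReal_cpow h916]
    norm_num
  have ecpow2 : (((3/4:ℝ):ℂ) - (Complex.I*s)*Complex.I)^(-(1/2:ℂ))
      = (((3/4 + s)^(-(1/2):ℝ) : ℝ) : ℂ) := by
    rw [e4, Complex.ofReal_cpow hp.le]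
    norm_num
  rw [Gc, ecpow1, ecpow2]
  rw [show -(2 * ((Real.sqrt (9/16 - s^2) : ℝ) : ℂ)) = ((-(2 * Real.sqrt (9/16 - s^2)) : ℝ) : ℂ) by push_cast; ring]
  rw [← Complex.ofReal_exp]
  have hfin : Real.sqrt (π/(3/4+s))/2 = Real.sqrt π / 2 * (3/4+s)^(-(1/2):ℝ) := by
    rw [Real.sqrt_div Real.pi_nonneg, Real.rpow_neg hp.le, ← Real.sqrt_eq_rpow]
    have hsp : Real.sqrt (3/4+s) ≠ 0 := ne_of_gt (Real.sqrt_pos.2 hp)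
    field_simp
  rw [show (3/4 + s) * (3/4 - s) = 9/16 - s^2 from hpq]
  push_cast
  rw [show ((Real.sqrt (π/(3/4+s)) : ℝ):ℂ)/2
      = ((Real.sqrt π : ℝ):ℂ)/2 * (((3/4+s)^(-(1/2):ℝ) : ℝ):ℂ) from by exact_mod_cast hfin]



lemma Jc_eq_Gc : EqOn Jc Gc Strip := by
  have hJd : DifferentiableOn ℂ Jc Strip :=
    fun τ hτ => (Jc_differentiableAt hτ).differentiableWithinAt
  have hGd : DifferentiableOn ℂ Gc Strip :=
    fun τ hτ => (Gc_differentiableAt hτ).differentiableWithinAt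
  have hJa : AnalyticOnNhd ℂ Jc Strip := hJd.analyticOnNhd isOpen_strip
  have hGa : AnalyticOnNhd ℂ Gc Strip := hGd.analyticOnNhd isOpen_strip
  have h0 : (0:ℂ) ∈ Strip := by simp [Strip]
  apply hJa.eqOn_of_preconnected_of_frequently_eq hGa preconnected_strip h0
  -- frequentely equal near 0
  set u : ℕ → ℂ := fun n => Complex.I * (((1:ℝ)/(n+2) : ℝ) : ℂ) with hu
  have hs : ∀ n : ℕ, |(1:ℝ)/(n+2)| < 3/4 := by
    intro n
    rw [abs_of_pos (by positivity)]
    rw [div_lt_iff₀ (by positivity)]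
    have : (1:ℝ) ≤ n + 2 := by
      have := Nat.cast_nonneg (α := ℝ) n; linarith
    nlinarith
  have htend : Filter.Tendsto u Filter.atTop (nhdsWithin 0 {z : ℂ | z ≠ 0}) := by
    apply tendsto_nhdsWithin_of_tendsto_nhds_of_eventually_within
    · have h1 : Filter.Tendsto (fun n : ℕ => (1:ℝ)/(n+2)) Filter.atTop (nhds 0) := by
        simp only [one_div]
        apply Filter.Tendsto.inv_tendsto_atTop
        exact Filter.tendsto_atTop_add_const_right _ 2 tendsto_natCast_atTop_atTop
      have h2 : Filter.Tendsto (fun n : ℕ => (((1:ℝ)/(n+2) : ℝ):ℂ)) Filter.atTop (nhds 0) := by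
        have := (Complex.continuous_ofReal.tendsto 0).comp h1
        simpa [Function.comp_def] using this
      have h3 := h2.const_mul (Complex.I)
      simpa [hu] using h3
    · filter_upwards with n
      simp only [hu, mem_setOf_eq]
      apply mul_ne_zero Complex.I_ne_zero
      simp only [ne_eq, Complex.ofReal_eq_zero]
      positivity
  apply htend.frequently
  apply Filter.Frequently.of_forall
  intro n
  exact Jc_eval (hs n)

lemma re_cpow_half_nonneg (z : ℂ) : 0 ≤ (z^((1/2:ℂ))).re := by
  by_cases hz : z = 0
  · rw [hz, Complex.zero_cpow (by norm_num : (1/2:ℂ) ≠ 0)]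
    simp
  · rw [Complex.cpow_def_of_ne_zero hz, Complex.exp_re]
    apply mul_nonneg (Real.exp_pos _).le
    apply Real.cos_nonneg_of_mem_Icc
    have h1 : (Complex.log z * (1/2)).im = z.arg / 2 := by
      simp [Complex.mul_im, Complex.log_im]
      ring
    constructor
    · rw [h1]
      linarith [Complex.neg_pi_lt_arg z]
    · rw [h1]
      linarith [Complex.arg_le_pi z, Real.pi_pos]

lemma cpow_neg_half_eval {z w : ℂ} (hz : z ≠ 0) (hw : w^2 = z) (hwre : 0 < w.re) :
    z^(-(1/2:ℂ)) = w⁻¹ := by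
  rw [Complex.cpow_neg]
  congr 1
  set w' := z^((1/2:ℂ)) with hw'
  have hw2 : w'^2 = z := by
    rw [hw', sq, ← Complex.cpow_add _ _ hz]
    norm_num
  have hfac : (w' - w) * (w' + w) = 0 := by
    have : w'^2 - w^2 = 0 := by rw [hw2, hw]; ring
    calc (w' - w) * (w' + w) = w'^2 - w^2 := by ring
      _ = 0 := this
  rcases mul_eq_zero.1 hfac with h | h
  · exact sub_eq_zero.1 h
  · exfalso
    have h2 : w' = -w := eq_neg_of_add_eq_zero_left h
    have h3 := re_cpow_half_nonneg z
    rw [← hw', h2] at h3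
    simp only [Complex.neg_re] at h3
    linarith



lemma sqrt2516 : ((((9/16:ℝ):ℂ)) + ((1:ℂ))^2)^((1/2:ℂ)) = (5/4:ℂ) := by
  have h1 : ((((9/16:ℝ):ℂ)) + ((1:ℂ))^2) = (((25/16:ℝ)):ℂ) := by push_cast; ring
  rw [h1, show ((1/2:ℂ)) = (((1/2:ℝ)):ℂ) by push_cast; ring, ← Complex.ofReal_cpow (by norm_num)]
  rw [← Real.sqrt_eq_rpow, show (25/16:ℝ) = (5/4)^2 by norm_num, Real.sqrt_sq (by norm_num)]
  push_cast; ring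

lemma sqrt2516' : ((((9/16:ℝ):ℂ)) + ((-1:ℂ))^2)^((1/2:ℂ)) = (5/4:ℂ) := by
  rw [show ((-1:ℂ))^2 = ((1:ℂ))^2 by ring]
  exact sqrt2516

lemma cpow1 : ((((3/4:ℝ):ℂ)) - 1*Complex.I)^(-(1/2:ℂ)) = (4+2*Complex.I)/5 := by
  have hI := Complex.I_sq
  have hz : (((3/4:ℝ):ℂ)) - 1*Complex.I ≠ 0 := by
    intro h
    have := congrArg Complex.im h
    simp at this
  have hw : ((1:ℂ) - Complex.I/2)^2 = (((3/4:ℝ):ℂ)) - 1*Complex.I := by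
    push_cast
    linear_combination (1/4 : ℂ) * hI
  have hwre : 0 < ((1:ℂ) - Complex.I/2).re := by simp
  rw [cpow_neg_half_eval hz hw hwre]
  rw [inv_eq_of_mul_eq_one_right]
  linear_combination (-(1:ℂ)/5) * hI
lemma cpow2 : ((((3/4:ℝ):ℂ)) - (-1)*Complex.I)^(-(1/2:ℂ)) = (4-2*Complex.I)/5 := by
  have hI := Complex.I_sq
  have hz : (((3/4:ℝ):ℂ)) - (-1)*Complex.I ≠ 0 := by
    intro h
    have := congrArg Complex.im h
    simp at this
  have hw : ((1:ℂ) + Complex.I/2)^2 = (((3/4:ℝ):ℂ)) - (-1)*Complex.I := by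
    push_cast
    linear_combination (1/4 : ℂ) * hI
  have hwre : 0 < ((1:ℂ) + Complex.I/2).re := by simp
  rw [cpow_neg_half_eval hz hw hwre]
  rw [inv_eq_of_mul_eq_one_right]
  linear_combination (-(1:ℂ)/5) * hI

lemma Jdiff : Jc 1 - Jc (-1)
    = ((Real.sqrt π : ℝ):ℂ) * ((Real.exp (-(5/2)) : ℝ):ℂ) * (2*Complex.I/5) := by
  have h1 : (1:ℂ) ∈ Strip := by simp [Strip]
  have h2 : (-1:ℂ) ∈ Strip := by simp [Strip]
  rw [Jc_eq_Gc h1, Jc_eq_Gc h2, Gc, Gc, sqrt2516, sqrt2516', cpow1, cpow2]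
  rw [show (-(2 * (5/4:ℂ))) = ((( -(5/2) : ℝ)):ℂ) by push_cast; ring, ← Complex.ofReal_exp]
  ring



lemma expo_im (τ : ℂ) (a : ℝ) :
    (expo τ a).im = τ.re * (a^2 - (a⁻¹)^2) := by
  simp only [expo, Complex.sub_re, Complex.neg_re, Complex.mul_re, Complex.ofReal_re,
    Complex.ofReal_im, Complex.sub_im, Complex.neg_im, Complex.add_re, Complex.add_im,
    Complex.mul_im, Complex.I_re, Complex.I_im]
  ring

noncomputable def gr (a : ℝ) : ℝ :=
  Real.sin (a^2 - (a⁻¹)^2) * Real.exp (-(3/4) * (a^2 + (a⁻¹)^2)) * (1 - (a⁻¹)^2)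

lemma gr_eq (a : ℝ) :
    gr a = ((((1 - (a⁻¹)^2 : ℝ)):ℂ) * Complex.exp (expo 1 a)).im := by
  have h1 : (Complex.exp (expo 1 a)).im
      = Real.exp (-(3/4) * (a^2 + (a⁻¹)^2)) * Real.sin (a^2 - (a⁻¹)^2) := by
    rw [Complex.exp_im, expo_re, expo_im]
    simp only [Complex.one_re, Complex.one_im]
    ring_nf
  have h2 : ((((1 - (a⁻¹)^2 : ℝ)):ℂ) * Complex.exp (expo 1 a)).im
      = (1 - (a⁻¹)^2) * (Complex.exp (expo 1 a)).im := by
    rw [Complex.mul_im, Complex.ofReal_re, Complex.ofReal_im]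
    ring
  rw [h2, h1, gr]
  ring

lemma gr_meas : Measurable gr := by unfold gr; fun_prop

lemma integrableOn_gr {s : Set ℝ} (hs : MeasurableSet s) (hsub : s ⊆ Ioi 0) :
    IntegrableOn gr s := by
  apply IntegrableOn.mono_set _ hsub
  apply Integrable.mono (integrableOn_master (by norm_num : (0:ℝ) < 3/4))
  · exact gr_meas.aestronglyMeasurable
  · rw [ae_restrict_iff' measurableSet_Ioi]
    filter_upwards with a ha
    have h1 : (0:ℝ) < a := ha
    rw [Real.norm_eq_abs, Real.norm_eq_abs,
      _root_.abs_of_nonneg (by positivity : (0:ℝ) ≤ (1 + a^2 + (a⁻¹)^2) * Real.exp (-(3/4) * (a^2 + (a⁻¹)^2)))]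
    unfold gr
    rw [abs_mul, abs_mul, Real.abs_exp]
    have hsin : |Real.sin (a^2 - (a⁻¹)^2)| ≤ 1 := Real.abs_sin_le_one _
    have habs : |1 - (a⁻¹)^2| ≤ 1 + a^2 + (a⁻¹)^2 := by
      rw [abs_sub_comm]
      calc |(a⁻¹)^2 - 1| ≤ |(a⁻¹)^2| + |1| := abs_sub _ _
        _ = (a⁻¹)^2 + 1 := by rw [_root_.abs_of_nonneg (sq_nonneg _), abs_one]
        _ ≤ 1 + a^2 + (a⁻¹)^2 := by nlinarith [sq_nonneg a]
    calc |Real.sin (a^2 - (a⁻¹)^2)| * Real.exp (-(3/4) * (a^2 + (a⁻¹)^2)) * |1 - (a⁻¹)^2|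
        ≤ 1 * Real.exp (-(3/4) * (a^2 + (a⁻¹)^2)) * (1 + a^2 + (a⁻¹)^2) := by
          apply mul_le_mul _ habs (abs_nonneg _) (by positivity)
          apply mul_le_mul_of_nonneg_right hsin (Real.exp_pos _).le
      _ = (1 + a^2 + (a⁻¹)^2) * Real.exp (-(3/4) * (a^2 + (a⁻¹)^2)) := by ring

lemma int_gr_eq : ∫ a in Ioi (0:ℝ), gr a = (Jc 1 - Jc (-1)).im := by
  have him : |(1:ℂ).im| < 3/4 := by simp
  have him' : |(-1:ℂ).im| < 3/4 := by simp
  have hint1 : IntegrableOn (fun a : ℝ => ((1:ℝ):ℂ) * Complex.exp (expo 1 a)) (Ioi 0) :=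
    integrableOn_cexpo him (fun _ => 1) zero_le_one
      (fun a ha => by
        have : (0:ℝ) < a := ha
        rw [abs_one]; nlinarith [sq_nonneg a, sq_nonneg a⁻¹]) measurable_const
  have hint2 : IntegrableOn (fun a : ℝ => (((a⁻¹)^2 : ℝ):ℂ) * Complex.exp (expo 1 a)) (Ioi 0) :=
    integrableOn_cexpo him (fun a => (a⁻¹)^2) zero_le_one
      (fun a ha => by
        have : (0:ℝ) < a := ha
        rw [_root_.abs_of_nonneg (sq_nonneg _)]
        nlinarith [sq_nonneg a, sq_nonneg a⁻¹]) (by fun_prop)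
  have hintF : IntegrableOn (fun a : ℝ => (((1 - (a⁻¹)^2 : ℝ)):ℂ) * Complex.exp (expo 1 a)) (Ioi 0) :=
    integrableOn_cexpo him (fun a => 1 - (a⁻¹)^2) zero_le_one
      (fun a ha => by
        have : (0:ℝ) < a := ha
        rw [one_mul]
        rw [abs_sub_comm]
        calc |(a⁻¹)^2 - 1| ≤ |(a⁻¹)^2| + |1| := abs_sub _ _
          _ = (a⁻¹)^2 + 1 := by rw [_root_.abs_of_nonneg (sq_nonneg _), abs_one]
          _ ≤ 1 + a^2 + (a⁻¹)^2 := by nlinarith [sq_nonneg a]) (by fun_prop)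
  have step1 : ∫ a in Ioi (0:ℝ), gr a
      = (∫ a in Ioi (0:ℝ), (((1 - (a⁻¹)^2 : ℝ)):ℂ) * Complex.exp (expo 1 a)).im := by
    have h := integral_im (𝕜 := ℂ) hintF
    simp only [RCLike.im_to_complex] at h
    rw [← h]
    apply setIntegral_congr_fun measurableSet_Ioi
    intro a _
    exact gr_eq a
  have step2 : (∫ a in Ioi (0:ℝ), (((1 - (a⁻¹)^2 : ℝ)):ℂ) * Complex.exp (expo 1 a))
      = Jc 1 - Jc (-1) := by
    have hsplit : ∀ a : ℝ, (((1 - (a⁻¹)^2 : ℝ)):ℂ) * Complex.exp (expo 1 a)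
        = ((1:ℝ):ℂ) * Complex.exp (expo 1 a) - (((a⁻¹)^2 : ℝ):ℂ) * Complex.exp (expo 1 a) := by
      intro a; push_cast; ring
    rw [show (fun a : ℝ => (((1 - (a⁻¹)^2 : ℝ)):ℂ) * Complex.exp (expo 1 a))
        = fun a : ℝ => ((1:ℝ):ℂ) * Complex.exp (expo 1 a)
          - (((a⁻¹)^2 : ℝ):ℂ) * Complex.exp (expo 1 a) from funext hsplit]
    rw [integral_sub hint1 hint2]
    congr 1
    · rw [Jc]
      apply setIntegral_congr_fun measurableSet_Ioi
      intro a _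
      simp
    · -- Jc (-1) = ∫ (a⁻¹)^2 * cexp (expo 1 a)
      rw [Jc, integral_inv_scale one_pos (fun x => Complex.exp (expo (-1) x))]
      apply setIntegral_congr_fun measurableSet_Ioi
      intro a ha
      have ha0 : (0:ℝ) < a := ha
      have ha0' : a ≠ 0 := ne_of_gt ha0
      have hexpo : expo (-1) (1/a) = expo 1 a := by
        simp only [expo, one_div, inv_inv, inv_pow]
        push_cast
        ring
      show (((a⁻¹)^2:ℝ):ℂ) * Complex.exp (expo 1 a)
        = (1/a^2) • Complex.exp (expo (-1) (1/a))
      rw [hexpo, Complex.real_smul]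
      push_cast
      ring
  rw [step1, step2]



lemma integral_inv_Ioo (g : ℝ → ℝ) :
    ∫ x in Ioi (1:ℝ), g x = ∫ a in Ioo (0:ℝ) 1, (1/a^2) • g (1/a) := by
  have himg : (fun a : ℝ => 1 / a) '' Ioo 0 1 = Ioi 1 := by
    ext y; constructor
    · rintro ⟨a, ⟨ha0, ha1⟩, rfl⟩
      exact (one_lt_div ha0).2 ha1
    · intro hy
      have hy1 : (1:ℝ) < y := hy
      refine ⟨1/y, ⟨by positivity, ?_⟩, by field_simp⟩
      rw [div_lt_one (by linarith)]; linarith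
  have hder : ∀ x ∈ Ioo (0:ℝ) 1, HasDerivWithinAt (fun a : ℝ => 1 / a) (-(1 / x^2)) (Ioo 0 1) x := by
    intro x hx
    have hx0 : x ≠ 0 := ne_of_gt hx.1
    have : HasDerivAt (fun a : ℝ => 1 / a) (-(1 / x^2)) x := by
      simpa [one_div] using hasDerivAt_inv hx0
    exact this.hasDerivWithinAt
  have hinj : InjOn (fun a : ℝ => 1 / a) (Ioo 0 1) := by
    intro a ha b hb h
    have ha0 : a ≠ 0 := ne_of_gt ha.1
    have hb0 : b ≠ 0 := ne_of_gt hb.1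
    field_simp at h
    exact h.symm
  have := integral_image_eq_integral_abs_deriv_smul measurableSet_Ioo hder hinj g
  rw [himg] at this
  rw [this]
  apply setIntegral_congr_fun measurableSet_Ioo
  intro x hx
  have hx0 : (0:ℝ) < x := hx.1
  simp only [abs_neg]
  rw [_root_.abs_of_pos (by positivity : (0:ℝ) < 1/x^2)]

lemma gr_reflect : ∫ a in Ioi (0:ℝ), gr a = 2 * ∫ a in Ioi (1:ℝ), gr a := by
  have hunion : Ioc (0:ℝ) 1 ∪ Ioi 1 = Ioi 0 := Ioc_union_Ioi_eq_Ioi zero_le_one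
  have hdisj : Disjoint (Ioc (0:ℝ) 1) (Ioi 1) := Ioc_disjoint_Ioi le_rfl
  rw [← hunion, setIntegral_union hdisj measurableSet_Ioi
    (integrableOn_gr measurableSet_Ioc (fun x hx => hx.1))
    (integrableOn_gr measurableSet_Ioi (fun x hx => show (0:ℝ) < x from lt_trans one_pos hx))]
  have h1 : ∫ a in Ioc (0:ℝ) 1, gr a = ∫ a in Ioo (0:ℝ) 1, gr a :=
    integral_Ioc_eq_integral_Ioo
  have h2 : ∫ x in Ioi (1:ℝ), gr x = ∫ a in Ioo (0:ℝ) 1, gr a := by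
    rw [integral_inv_Ioo gr]
    apply setIntegral_congr_fun measurableSet_Ioo
    intro a ha
    have ha0 : (0:ℝ) < a := ha.1
    have ha0' : a ≠ 0 := ne_of_gt ha0
    show (1/a^2) • gr (1/a) = gr a
    rw [smul_eq_mul]
    simp only [gr, one_div, inv_inv, inv_pow]
    rw [show ((a^2)⁻¹ - a^2) = -(a^2 - (a^2)⁻¹) by ring, Real.sin_neg,
      show ((a^2)⁻¹ + a^2) = (a^2 + (a^2)⁻¹) by ring]
    field_simp
    ring
  rw [h1, ← h2]
  ring

lemma main_sub : (∫ x in Ioi (0:ℝ),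
      Real.sin (4 * Real.sqrt (x * (x + 1))) / Real.sqrt (x + 1) * Real.exp (-3 * x))
    = Real.exp (3/2) * ∫ a in Ioi (1:ℝ), gr a := by
  set φ : ℝ → ℝ := fun a => (a - a⁻¹)^2/4 with hφdef
  set φ' : ℝ → ℝ := fun a => (a - a⁻¹)*(1 + (a⁻¹)^2)/2 with hφ'def
  have himg : φ '' Ioi 1 = Ioi 0 := by
    ext x; constructor
    · rintro ⟨a, ha, rfl⟩
      have ha1 : (1:ℝ) < a := ha
      have hainv : a⁻¹ < 1 := by
        rw [inv_lt_one_iff₀]; right; exact ha1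
      show (0:ℝ) < (a - a⁻¹)^2/4
      have : 0 < a - a⁻¹ := by linarith
      positivity
    · intro hx
      have hx0 : (0:ℝ) < x := hx
      set s := Real.sqrt (x+1) with hsdef
      set t := Real.sqrt x with htdef
      have hs2 : s^2 = x + 1 := Real.sq_sqrt (by linarith)
      have ht2 : t^2 = x := Real.sq_sqrt hx0.le
      have hs1 : 1 ≤ s := by
        have h9 : Real.sqrt 1 ≤ Real.sqrt (x+1) := Real.sqrt_le_sqrt (by linarith)
        rw [Real.sqrt_one] at h9
        exact h9
      have ht0 : 0 < t := Real.sqrt_pos.2 hx0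
      refine ⟨s + t, by show (1:ℝ) < s + t; linarith, ?_⟩
      have hmul : (s + t) * (s - t) = 1 := by
        have : (s + t) * (s - t) = s^2 - t^2 := by ring
        rw [this, hs2, ht2]; ring
      have hinv : (s + t)⁻¹ = s - t := inv_eq_of_mul_eq_one_right hmul
      show ((s+t) - (s+t)⁻¹)^2/4 = x
      rw [hinv, show (s + t) - (s - t) = 2*t by ring]
      rw [show (2*t)^2/4 = t^2 by ring, ht2]
  have hder : ∀ a ∈ Ioi (1:ℝ), HasDerivWithinAt φ (φ' a) (Ioi 1) a := by
    intro a ha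
    have ha1 : (1:ℝ) < a := ha
    have ha0 : a ≠ 0 := by intro h; rw [h] at ha1; norm_num at ha1
    have hψ : HasDerivAt (fun a : ℝ => a - a⁻¹) (1 + (a⁻¹)^2) a := by
      have := (hasDerivAt_id a).sub (hasDerivAt_inv ha0)
      exact this.congr_deriv (by ring)
    have h2 := (hψ.pow 2).div_const 4
    have h3 : HasDerivAt φ (φ' a) a := by
      exact h2.congr_deriv (by simp only [hφ'def]; ring)
    exact h3.hasDerivWithinAt
  have hinj : InjOn φ (Ioi 1) := by
    intro a ha b hb h
    have ha1 : (1:ℝ) < a := ha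
    have hb1 : (1:ℝ) < b := hb
    have ha0 : a ≠ 0 := by positivity
    have hb0 : b ≠ 0 := by positivity
    have hainv : a⁻¹ < 1 := by rw [inv_lt_one_iff₀]; right; exact ha1
    have hbinv : b⁻¹ < 1 := by rw [inv_lt_one_iff₀]; right; exact hb1
    have hψa : 0 < a - a⁻¹ := by linarith
    have hψb : 0 < b - b⁻¹ := by linarith
    have h4 : (a - a⁻¹)^2 = (b - b⁻¹)^2 := by
      simp only [hφdef] at h; linarith
    have h5 : a - a⁻¹ = b - b⁻¹ := by nlinarith
    have h6 : (a - b) * (a*b + 1) = 0 := by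
      field_simp at h5
      nlinarith [h5]
    have h7 : 0 < a*b + 1 := by nlinarith
    rcases mul_eq_zero.1 h6 with h8 | h8
    · linarith
    · linarith
  have key := integral_image_eq_integral_abs_deriv_smul measurableSet_Ioi hder hinj
    (fun x => Real.sin (4 * Real.sqrt (x * (x + 1))) / Real.sqrt (x + 1) * Real.exp (-3 * x))
  rw [himg] at key
  rw [key, ← integral_const_mul]
  apply setIntegral_congr_fun measurableSet_Ioi
  intro a ha
  have ha1 : (1:ℝ) < a := ha
  have ha0 : (0:ℝ) < a := by linarith
  have ha0' : a ≠ 0 := ne_of_gt ha0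
  have hid : a * a⁻¹ = 1 := mul_inv_cancel₀ ha0'
  have hainv : a⁻¹ < 1 := by rw [inv_lt_one_iff₀]; right; exact ha1
  have hainv0 : 0 < a⁻¹ := by positivity
  have hψ : 0 < a - a⁻¹ := by linarith
  have hφa : φ a = ((a - a⁻¹)/2)^2 := by simp only [hφdef]; ring
  have hφ1 : φ a + 1 = ((a + a⁻¹)/2)^2 := by
    simp only [hφdef]
    field_simp
    ring
  have hs1 : Real.sqrt (φ a) = (a - a⁻¹)/2 := by
    rw [hφa, Real.sqrt_sq (by linarith)]
  have hs2 : Real.sqrt (φ a + 1) = (a + a⁻¹)/2 := by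
    rw [hφ1, Real.sqrt_sq (by positivity)]
  have hprod : Real.sqrt (φ a * (φ a + 1)) = ((a - a⁻¹)/2) * ((a + a⁻¹)/2) := by
    rw [Real.sqrt_mul (by rw [hφa]; positivity), hs1, hs2]
  have harg : 4 * Real.sqrt (φ a * (φ a + 1)) = a^2 - (a⁻¹)^2 := by
    rw [hprod]; ring
  have hexp3 : Real.exp (-3 * φ a) = Real.exp (3/2) * Real.exp (-(3/4) * (a^2 + (a⁻¹)^2)) := by
    rw [← Real.exp_add]
    congr 1
    simp only [hφdef]
    linear_combination (3/2 : ℝ) * hid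
  have hφ'pos : 0 < φ' a := by
    simp only [hφ'def]; positivity
  show |φ' a| • (Real.sin (4 * Real.sqrt (φ a * (φ a + 1))) / Real.sqrt (φ a + 1)
      * Real.exp (-3 * φ a)) = Real.exp (3/2) * gr a
  rw [smul_eq_mul, _root_.abs_of_pos hφ'pos, harg, hs2, hexp3]
  simp only [hφ'def, gr]
  have hne : a + a⁻¹ ≠ 0 := by positivity
  field_simp

lemma imcalc (x y : ℝ) : ((x:ℂ)*(y:ℂ)*(2*Complex.I/5)).im = x*y*(2/5) := by
  simp [Complex.mul_im, Complex.mul_re, Complex.div_im, Complex.div_re]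

theorem stmt13 :
    ∫ x in Set.Ioi (0:ℝ),
        Real.sin (4 * Real.sqrt (x * (x + 1))) / Real.sqrt (x + 1) * Real.exp (-3 * x)
      = Real.sqrt π / (5 * Real.exp 1) := by
  rw [main_sub]
  rw [show (∫ a in Ioi (1:ℝ), gr a) = (1/2) * ∫ a in Ioi (0:ℝ), gr a from by
    rw [gr_reflect]; ring]
  rw [int_gr_eq, Jdiff, imcalc]
  have hexp : Real.exp (3/2) * Real.exp (-(5/2)) = (Real.exp 1)⁻¹ := by
    rw [← Real.exp_add, show (3/2 : ℝ) + (-(5/2)) = -1 by norm_num, Real.exp_neg]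
  calc Real.exp (3/2) * (1/2 * (Real.sqrt π * Real.exp (-(5/2)) * (2/5)))
      = Real.sqrt π * (Real.exp (3/2) * Real.exp (-(5/2))) / 5 := by ring
    _ = Real.sqrt π * (Real.exp 1)⁻¹ / 5 := by rw [hexp]
    _ = Real.sqrt π / (5 * Real.exp 1) := by
        rw [mul_comm (5:ℝ) (Real.exp 1), ← div_div, div_eq_mul_inv (Real.sqrt π)]
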